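/- Let R = ℚ[a₁,…,a₁₂] and let I ⊆ R be the ideal generated by the nine polynomials 5a₂ + 3a₇, a₃ + 9a₈, 2a₂a₅ − 2a₁a₆ + (1/5)a₄, 10a₁ − a₁₁, 5a₂ − 9a₁₂, 6a₂a₉ − 6a₁a₁₀ − a₃, a₅ + a₁₀, 5a₆ + a₁₁, 2a₆a₉ − 2a₅a₁₀ − (1/3)a₇ − (1/5)a₁₂. Then the ℚ-algebra homomorphism ℚ[x, y, z] → R/I sending x, y, z to the classes of a₁, a₅, a₉ is an isomorphism of ℚ-algebras; in particular R/I is isomorphic to a polynomial ring in three variables over ℚ. -/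

import Mathlib

open MvPolynomial
open Fin.NatCast

/-- `a i` is the variable `aᵢ` (for `1 ≤ i ≤ 12`) of `ℚ[a₁,…,a₁₂]`. -/
noncomputable def a (i : ℕ) : MvPolynomial (Fin 12) ℚ := X ((i - 1 : ℕ) : Fin 12)

/-- The ideal of the nine equations cutting out the affine chart `V₁₂` of the
Mukai–Umemura threefold inside the standard affine Schubert cell of `Gr(3,7)`. -/
noncomputable def I : Ideal (MvPolynomial (Fin 12) ℚ) :=
  Ideal.span
    {5 * a 2 + 3 * a 7,
     a 3 + 9 * a 8,
     2 * a 2 * a 5 - 2 * a 1 * a 6 + C (1 / 5 : ℚ) * a 4,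
     10 * a 1 - a 11,
     5 * a 2 - 9 * a 12,
     6 * a 2 * a 9 - 6 * a 1 * a 10 - a 3,
     a 5 + a 10,
     5 * a 6 + a 11,
     2 * a 6 * a 9 - 2 * a 5 * a 10 - C (1 / 3 : ℚ) * a 7 - C (1 / 5 : ℚ) * a 12}

/-- The ℚ-algebra homomorphism `ℚ[x,y,z] → R/I` sending `x, y, z` to the classes of
`a₁, a₅, a₉`. -/
noncomputable def φ : MvPolynomial (Fin 3) ℚ →ₐ[ℚ] MvPolynomial (Fin 12) ℚ ⧸ I :=
  MvPolynomial.aeval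
    ![Ideal.Quotient.mk I (a 1), Ideal.Quotient.mk I (a 5), Ideal.Quotient.mk I (a 9)]

/-! The nine equations can be solved successively for the nine coordinates other than
`a₁, a₅, a₉`: first `a₁₁, a₁₀, a₆` linearly, then `a₂` from the last equation, and then
`a₇, a₁₂, a₃, a₈, a₄`. The resulting parametrisation `ℚ[a₁,…,a₁₂] → ℚ[x,y,z]` kills `I`, and the
map it induces on `R/I` is a two-sided inverse of `φ`. -/

/-- `chartParam i` is the value of `aᵢ₊₁` at the point of `V₁₂` with `(a₁, a₅, a₉) = (x, y, z)`. -/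
noncomputable def chartParam : Fin 12 → MvPolynomial (Fin 3) ℚ
  | 0 => X 0
  | 1 => 9 * X 0 * X 2 - C (9 / 2) * X 1 ^ 2
  | 2 => 54 * X 0 * X 2 ^ 2 - 27 * X 1 ^ 2 * X 2 + 6 * X 0 * X 1
  | 3 => -90 * X 0 * X 1 * X 2 + 45 * X 1 ^ 3 - 20 * X 0 ^ 2
  | 4 => X 1
  | 5 => -2 * X 0
  | 6 => C (15 / 2) * X 1 ^ 2 - 15 * X 0 * X 2
  | 7 => -6 * X 0 * X 2 ^ 2 + 3 * X 1 ^ 2 * X 2 - C (2 / 3) * X 0 * X 1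
  | 8 => X 2
  | 9 => -X 1
  | 10 => 10 * X 0
  | 11 => 5 * X 0 * X 2 - C (5 / 2) * X 1 ^ 2

theorem I_le_ker_aeval_chartParam : I ≤ RingHom.ker (aeval chartParam) := by
  rw [I, Ideal.span_le]
  intro p hp
  simp only [Set.mem_insert_iff, Set.mem_singleton_iff] at hp
  rcases hp with rfl | rfl | rfl | rfl | rfl | rfl | rfl | rfl | rfl <;>
  · simp only [SetLike.mem_coe, RingHom.mem_ker, a, map_add, map_sub, map_mul, map_ofNat,
      aeval_X, algHom_C]
    norm_num [chartParam] <;> polynomial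

noncomputable def φInv : MvPolynomial (Fin 12) ℚ ⧸ I →ₐ[ℚ] MvPolynomial (Fin 3) ℚ :=
  Ideal.Quotient.liftₐ I (aeval chartParam) fun _ hp ↦ I_le_ker_aeval_chartParam hp

theorem φInv_mk (p : MvPolynomial (Fin 12) ℚ) :
    φInv (Ideal.Quotient.mk I p) = aeval chartParam p :=
  rfl

theorem φInv_comp_φ : φInv.comp φ = AlgHom.id ℚ _ := by
  refine MvPolynomial.algHom_ext fun j ↦ ?_
  fin_cases j <;> simp [φ, φInv_mk, a, chartParam]

local notation "ā" k:max => Ideal.Quotient.mk I (a k)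

theorem X_eq_a (i : Fin 12) : (X i : MvPolynomial (Fin 12) ℚ) = a (i + 1) := by
  simp [a]

theorem φ_chartParam (i : Fin 12) : φ (chartParam i) = Ideal.Quotient.mk I (X i) := by
  have hgen : ∀ p ∈ _, Ideal.Quotient.mk I p = 0 := fun p hp ↦
    Ideal.Quotient.eq_zero_iff_mem.mpr (by rw [I]; exact Ideal.subset_span hp)
  simp only [Set.forall_mem_insert, Set.mem_singleton_iff, forall_eq, map_add, map_sub, map_mul,
    map_ofNat, ← algebraMap_eq, Ideal.Quotient.mk_algebraMap] at hgen
  obtain ⟨g1, g2, g3, g4, g5, g6, g7, g8, g9⟩ := hgen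
  have h11 : ā 11 = 10 * ā 1 := by linear_combination -g4
  have h10 : ā 10 = -ā 5 := by linear_combination g7
  have h6 : ā 6 = -(2 * ā 1) := by
    linear_combination (norm := algebra) (1 / 5 : ℚ) • (g8 + g4)
  have h2 : ā 2 = 9 * ā 1 * ā 9 - algebraMap ℚ _ (9 / 2) * ā 5 ^ 2 := by
    linear_combination (norm := algebra) (9 / 4 : ℚ) • g9 + (1 / 4 : ℚ) • g1 - (1 / 20 : ℚ) • g5 -
      (9 / 2 : ℚ) • (ā 9 * h6) + (9 / 2 : ℚ) • (ā 5 * h10)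
  have h7 : ā 7 = algebraMap ℚ _ (15 / 2) * ā 5 ^ 2 - 15 * ā 1 * ā 9 := by
    linear_combination (norm := algebra) (1 / 3 : ℚ) • g1 - (5 / 3 : ℚ) • h2
  have h12 : ā 12 = 5 * ā 1 * ā 9 - algebraMap ℚ _ (5 / 2) * ā 5 ^ 2 := by
    linear_combination (norm := algebra) (-1 / 9 : ℚ) • g5 + (5 / 9 : ℚ) • h2
  have h3 : ā 3 = 54 * ā 1 * ā 9 ^ 2 - 27 * ā 5 ^ 2 * ā 9 + 6 * ā 1 * ā 5 := by
    linear_combination (norm := algebra) -g6 + 6 * ā 9 * h2 - 6 * ā 1 * h10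
  have h8 : ā 8 =
      -(6 * ā 1 * ā 9 ^ 2) + 3 * ā 5 ^ 2 * ā 9 - algebraMap ℚ _ (2 / 3) * ā 1 * ā 5 := by
    linear_combination (norm := algebra) (1 / 9 : ℚ) • (g2 - h3)
  have h4 : ā 4 = -(90 * ā 1 * ā 5 * ā 9) + 45 * ā 5 ^ 3 - 20 * ā 1 ^ 2 := by
    linear_combination (norm := algebra) 5 * g3 + 10 * ā 1 * h6 - 10 * ā 5 * h2
  rw [X_eq_a]
  fin_cases i <;> simp [chartParam, φ, h2, h3, h4, h6, h7, h8, h10, h11, h12]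

theorem φ_comp_φInv : φ.comp φInv = AlgHom.id ℚ _ := by
  refine Ideal.Quotient.algHom_ext ℚ (MvPolynomial.algHom_ext fun i ↦ ?_)
  simp [φInv_mk, φ_chartParam]

/-- The chart `V₁₂` of the Mukai–Umemura threefold is isomorphic to affine 3-space
with coordinates `a₁, a₅, a₉`: the algebra map `ℚ[x,y,z] → R/I` is an isomorphism. -/
theorem stmt_18 : Function.Bijective φ :=
  (AlgEquiv.ofAlgHom φ φInv φ_comp_φInv φInv_comp_φ).bijective
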